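/- For the trigonometric systems on nested intervals: for j ≥ 1 and 1 ≤ i, the cross inner product between a local cosine basis function on a subinterval and a global one satisfies |∫_{k/s}^{(k+1)/s} √s φⱼ(s x − k) φᵢ(x) dx| ≤ C j^{−2} i², for a universal constant C, where φⱼ(u) = √2 cos(π j u). -/

import Mathlib

open Real intervalIntegral

/-!
Substituting `u = s x - k` turns the integral into `s^{-1/2} ∫₀¹ 2 cos(π j u) cos(ω u + ω k)` with
`ω = π i / s ≤ π i`. By product-to-sum this integral is explicit: the boundary values of the
two antiderivatives agree up to sign (since `sin (π j ± x) = ±(-1)^j sin x`), so only the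
difference `1/(πj + ω) - 1/(πj - ω) = -2ω/(π²j² - ω²)` survives, which is `O(ω / j²)` once
`2ω ≤ π j`. In the remaining range `j < 2 i` and the trivial bound `2` is already `O(i² / j²)`.
-/

theorem integral_cos_mul_add {a : ℝ} (ha : a ≠ 0) (b p q : ℝ) :
    ∫ x in p..q, cos (a * x + b) = (sin (a * q + b) - sin (a * p + b)) / a := by
  rw [integral_comp_mul_add cos ha b, integral_cos, smul_eq_mul]
  ring

theorem integral_unit_two_mul_cos_mul_cos (j : ℕ) {ω : ℝ} (hω : ω ^ 2 ≠ (π * j) ^ 2) (c : ℝ) :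
    ∫ u in (0 : ℝ)..1, 2 * cos (π * j * u) * cos (ω * u + c) =
      2 * ω * ((-1) ^ j * sin (ω + c) - sin c) / (ω ^ 2 - (π * j) ^ 2) := by
  have hsub : π * j - ω ≠ 0 := fun h => hω (by rw [sub_eq_zero.mp h])
  have hadd : π * j + ω ≠ 0 := fun h => hω (by rw [eq_neg_of_add_eq_zero_right h]; ring)
  have hcont : ∀ a b : ℝ, IntervalIntegrable (fun u => cos (a * u + b)) MeasureTheory.volume 0 1 :=
    fun a b => (continuous_cos.comp (by fun_prop)).intervalIntegrable _ _
  have hsplit : (fun u => 2 * cos (π * j * u) * cos (ω * u + c)) =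
      fun u => cos ((π * j - ω) * u + -c) + cos ((π * j + ω) * u + c) := by
    funext u
    rw [two_mul_cos_mul_cos]
    congr 2 <;> ring
  rw [hsplit, integral_add (hcont _ _) (hcont _ _), integral_cos_mul_add hsub, integral_cos_mul_add hadd]
  have h1 : sin ((π * j - ω) * 1 + -c) = -((-1) ^ j * sin (ω + c)) := by
    rw [← sin_nat_mul_pi_sub]; ring_nf
  have h2 : sin ((π * j + ω) * 1 + c) = (-1) ^ j * sin (ω + c) := by
    rw [← sin_add_nat_mul_pi]; ring_nf
  rw [h1, h2]
  simp only [mul_zero, zero_add, sin_neg]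
  rw [show ω ^ 2 - (π * j) ^ 2 = -((π * j - ω) * (π * j + ω)) by ring]
  field_simp
  ring

theorem abs_integral_unit_two_mul_cos_mul_cos_le_two (a ω c : ℝ) :
    |∫ u in (0 : ℝ)..1, 2 * cos (a * u) * cos (ω * u + c)| ≤ 2 := by
  have hbound : ∀ u ∈ Set.uIoc (0 : ℝ) 1, ‖2 * cos (a * u) * cos (ω * u + c)‖ ≤ 2 := by
    intro u _
    simp only [norm_mul, Real.norm_eq_abs, abs_two]
    have h1 := abs_cos_le_one (a * u)
    have h2 := abs_cos_le_one (ω * u + c)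
    have h3 := abs_nonneg (cos (ω * u + c))
    nlinarith
  simpa using norm_integral_le_of_norm_le_const hbound

theorem abs_integral_unit_two_mul_cos_mul_cos_le {j : ℕ} (hj : 0 < j) {ω : ℝ}
    (hω : 2 * |ω| ≤ π * j) (c : ℝ) :
    |∫ u in (0 : ℝ)..1, 2 * cos (π * j * u) * cos (ω * u + c)| ≤ |ω| / j ^ 2 := by
  have hj' : (0 : ℝ) < j := Nat.cast_pos.mpr hj
  have hgap : ω ^ 2 - (π * j) ^ 2 ≤ -(4 * (j : ℝ) ^ 2) := by
    have hω2 : 4 * ω ^ 2 ≤ (π * j) ^ 2 := by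
      rw [← sq_abs ω]; nlinarith [abs_nonneg ω]
    have hπ2 : 9 ≤ π ^ 2 := by nlinarith [pi_gt_three]
    nlinarith [mul_le_mul_of_nonneg_right hπ2 (sq_nonneg (j : ℝ))]
  have hneg : ω ^ 2 - (π * j) ^ 2 < 0 := by nlinarith
  have hT : |(-1) ^ j * sin (ω + c) - sin c| ≤ 2 := by
    calc _ ≤ |(-1) ^ j * sin (ω + c)| + |sin c| := abs_sub _ _
      _ ≤ 1 + 1 := by
          gcongr
          · rw [abs_mul, abs_pow, abs_neg, abs_one, one_pow, one_mul]; exact abs_sin_le_one _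
          · exact abs_sin_le_one _
      _ = 2 := by norm_num
  rw [integral_unit_two_mul_cos_mul_cos j (sub_ne_zero.mp hneg.ne) c, abs_div, abs_mul, abs_mul,
    abs_two, abs_of_neg hneg, div_le_div_iff₀ (by linarith) (by positivity)]
  nlinarith [mul_le_mul_of_nonneg_left hT (by positivity : 0 ≤ 2 * |ω| * (j : ℝ) ^ 2),
    mul_le_mul_of_nonneg_left hgap (abs_nonneg ω)]

theorem integral_rescaled_cos_mul_cos {s : ℝ} (hs : 0 < s) (k j i : ℝ) :
    ∫ x in k / s..(k + 1) / s, (√s * (√2 * cos (π * j * (s * x - k)))) * (√2 * cos (π * i * x)) =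
      (√s)⁻¹ * ∫ u in (0 : ℝ)..1, 2 * cos (π * j * u) * cos (π * i / s * u + π * i / s * k) := by
  have hs' : s ≠ 0 := hs.ne'
  let F : ℝ → ℝ := fun u => 2 * cos (π * j * u) * cos (π * i / s * u + π * i / s * k)
  have hrescale : ∀ x, (√s * (√2 * cos (π * j * (s * x - k)))) * (√2 * cos (π * i * x)) =
      √s * F (s * x - k) := by
    intro x
    simp only [F]
    have h2 : √2 * √2 = 2 := mul_self_sqrt zero_le_two
    rw [show π * i / s * (s * x - k) + π * i / s * k = π * i * x by field_simp; ring]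
    linear_combination √s * cos (π * j * (s * x - k)) * cos (π * i * x) * h2
  rw [integral_congr (fun x _ => hrescale x), integral_const_mul, integral_comp_mul_sub F hs',
    smul_eq_mul, show s * (k / s) - k = 0 by field_simp; ring, show s * ((k + 1) / s) - k = 1 by field_simp; ring]
  rw [← mul_assoc, ← div_eq_mul_inv, sqrt_div_self]

/-- Cross inner products between the rescaled cosine basis `φ_{skj}(x) = √s φⱼ(sx − k)`
on `[k/s, (k+1)/s]` and the global cosine basis `φᵢ` satisfy
`|∫_{k/s}^{(k+1)/s} φ_{skj} φᵢ| ≤ C j^{-2} i²` for a universal constant `C`. -/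
theorem stmt_16 :
    ∃ C : ℝ, 0 < C ∧ ∀ s k j i : ℕ, 1 ≤ s → k ≤ s - 1 → 1 ≤ j → 1 ≤ i →
      |∫ x in ((k : ℝ) / s)..((k + 1 : ℝ) / s),
          (Real.sqrt s * (Real.sqrt 2 * Real.cos (Real.pi * j * (s * x - k)))) *
            (Real.sqrt 2 * Real.cos (Real.pi * i * x))| ≤
        C * (i : ℝ) ^ 2 / (j : ℝ) ^ 2 := by
  refine ⟨8, by norm_num, fun s k j i hs _ hj hi => ?_⟩
  have hs' : (1 : ℝ) ≤ s := Nat.one_le_cast.mpr hs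
  have hj' : (1 : ℝ) ≤ j := Nat.one_le_cast.mpr hj
  have hi' : (1 : ℝ) ≤ i := Nat.one_le_cast.mpr hi
  set ω := π * i / s
  have hω0 : 0 ≤ ω := by positivity
  have hωi : ω ≤ π * i := div_le_self (by positivity) hs'
  set J := ∫ u in (0 : ℝ)..1, 2 * cos (π * j * u) * cos (ω * u + ω * k)
  have hJ : |J| ≤ 8 * (i : ℝ) ^ 2 / (j : ℝ) ^ 2 := by
    rw [le_div_iff₀ (by positivity)]
    rcases le_or_gt (2 * ω) (π * j) with hsmall | hlarge
    · have h := abs_integral_unit_two_mul_cos_mul_cos_le hj (by rwa [abs_of_nonneg hω0]) (ω * k)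
      rw [abs_of_nonneg hω0, le_div_iff₀ (by positivity)] at h
      nlinarith [pi_lt_four]
    · have h := abs_integral_unit_two_mul_cos_mul_cos_le_two (π * j) ω (ω * k)
      have hji : (j : ℝ) < 2 * i := by nlinarith [pi_pos]
      nlinarith
  rw [integral_rescaled_cos_mul_cos (by positivity), abs_mul, abs_inv, abs_of_nonneg (sqrt_nonneg _)]
  exact (mul_le_of_le_one_left (abs_nonneg J) (inv_le_one_of_one_le₀ (one_le_sqrt.mpr hs'))).trans hJ
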